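/- For each a ∈ (-1,0) ∪ (0,1) there exists a non-constant, non-periodic solution M = (M₁,M₂,M₃) : ℝ → ℝ³ of the system Ṁ₁ = M₂M₃ + (3/(1+a))·sign(a)·M₂, Ṁ₂ = -M₁M₃ - (3(1+a)/(4|a|))·M₁, Ṁ₃ = (1/(4a²) - 1/(a(1+a)²))·M₁M₂ satisfying (M₁(t)² + M₂(t)²)/(2|a|(1+a)) + 3M₃(t) + (9/16)·(a²+6a+1)/(|a|(1+a)) = 0 for all t. -/

import Mathlib

/-!
Shifting `M₃` and rescaling `(M₁, M₂)` normalise the system to `Ṁ₁ = M₂ (M₃ + α)`,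
`Ṁ₂ = -M₁ (M₃ + β)`, `Ṁ₃ = M₁ M₂` on the invariant paraboloid `M₁² + M₂² = -2 (β - α) M₃`,
where `α < β` and `0 < β`. Its separatrices are explicit. For `α ≤ 0` the orbit homoclinic to
the apex is `M₃ = -2β / (1 + β (β - α) φ²)` with `φ = sinh (h t) / h`, `h² = -αβ` (and `φ = t`
when `α = 0`, where the decay is only algebraic). For `α > 0` the orbit heteroclinic between the
equilibria `M₁ = 0`, `M₃ = -α` is `M₃ = -α + w² / (e cosh (w t) + β - α)` with `w² = 2α (β - α)`,
`e² = (β - α)² + w²`. On both, `M₂` vanishes only at `t = 0`, which rules out periodicity.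
-/

open Real

structure IsLiePoissonSolution (α β γ : ℝ) (M₁ M₂ M₃ : ℝ → ℝ) : Prop where
  deriv₁ : ∀ t, HasDerivAt M₁ (M₂ t * (M₃ t + α)) t
  deriv₂ : ∀ t, HasDerivAt M₂ (-(M₁ t * (M₃ t + β))) t
  deriv₃ : ∀ t, HasDerivAt M₃ (γ * (M₁ t * M₂ t)) t

namespace IsLiePoissonSolution

variable {α β γ : ℝ} {M₁ M₂ M₃ : ℝ → ℝ}

lemma add_const {c : ℝ} (h : IsLiePoissonSolution (α + c) (β + c) γ M₁ M₂ M₃) :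
    IsLiePoissonSolution α β γ M₁ M₂ (fun t => M₃ t + c) where
  deriv₁ t := (h.deriv₁ t).congr_deriv (by ring)
  deriv₂ t := (h.deriv₂ t).congr_deriv (by ring)
  deriv₃ t := (h.deriv₃ t).add_const c

lemma const_mul (h : IsLiePoissonSolution α β γ M₁ M₂ M₃) {s : ℝ} (hs : s ≠ 0) :
    IsLiePoissonSolution α β (γ / s ^ 2) (fun t => s * M₁ t) (fun t => s * M₂ t) M₃ where
  deriv₁ t := ((h.deriv₁ t).const_mul s).congr_deriv (by ring)
  deriv₂ t := ((h.deriv₂ t).const_mul s).congr_deriv (by ring)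
  deriv₃ t := (h.deriv₃ t).congr_deriv (by field_simp)

end IsLiePoissonSolution

lemma exists_homoclinic_of_sinh_like {α β : ℝ} (hβ : 0 < β) (hαβ : α < β) {φ ψ : ℝ → ℝ}
    (hφ : ∀ t, HasDerivAt φ (ψ t) t) (hψ : ∀ t, HasDerivAt ψ (-(α * β) * φ t) t)
    (hψφ : ∀ t, ψ t ^ 2 + α * β * φ t ^ 2 = 1) :
    ∃ M₁ M₂ M₃ : ℝ → ℝ, IsLiePoissonSolution α β 1 M₁ M₂ M₃ ∧ (∀ t, M₂ t = 0 ↔ φ t = 0) ∧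
      ∀ t, M₁ t ^ 2 + M₂ t ^ 2 = 2 * (β - α) * -M₃ t := by
  have hκ : 0 < β * (β - α) := mul_pos hβ (by linarith)
  obtain ⟨k, hk0, hk⟩ : ∃ k : ℝ, k ≠ 0 ∧ k ^ 2 = 4 * (β * (β - α)) :=
    ⟨2 * √(β * (β - α)), by positivity, by rw [mul_pow, sq_sqrt hκ.le]; ring⟩
  obtain ⟨E, hE⟩ : ∃ E : ℝ → ℝ, ∀ t, E t = 1 + β * (β - α) * φ t ^ 2 := ⟨_, fun _ => rfl⟩
  have hE0 : ∀ t, E t ≠ 0 := fun t => by rw [hE]; positivity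
  have hE' : ∀ t, HasDerivAt E (2 * β * (β - α) * φ t * ψ t) t := fun t => by
    rw [funext hE]
    exact ((((hφ t).pow 2).const_mul (β * (β - α))).const_add 1).congr_deriv (by ring)
  refine ⟨fun t => k * ψ t / E t, fun t => k * β * φ t / E t, fun t => -2 * β / E t,
    ⟨fun t => ?_, fun t => ?_, fun t => ?_⟩, fun t => ?_, fun t => ?_⟩
  · refine (((hψ t).const_mul k).div (hE' t) (hE0 t)).congr_deriv ?_
    field_simp [hE0 t]
    linear_combination (-2 * α * φ t) * hE t - 2 * (β - α) * φ t * hψφ t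
  · refine (((hφ t).const_mul (k * β)).div (hE' t) (hE0 t)).congr_deriv ?_
    field_simp [hE0 t]
    linear_combination 2 * ψ t * hE t
  · refine ((hasDerivAt_const t (-2 * β)).div (hE' t) (hE0 t)).congr_deriv ?_
    field_simp [hE0 t]
    linear_combination (-(β * φ t * ψ t)) * hk
  · simp [hk0, hβ.ne', hE0 t]
  · field_simp [hE0 t]
    linear_combination (ψ t ^ 2 + β ^ 2 * φ t ^ 2) * hk + 4 * β * (β - α) * (hψφ t - hE t)

lemma exists_homoclinic {α β : ℝ} (hα : α ≤ 0) (hβ : 0 < β) :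
    ∃ M₁ M₂ M₃ : ℝ → ℝ, IsLiePoissonSolution α β 1 M₁ M₂ M₃ ∧ (∀ t, M₂ t = 0 ↔ t = 0) ∧
      ∀ t, M₁ t ^ 2 + M₂ t ^ 2 = 2 * (β - α) * -M₃ t := by
  have hαβ : α < β := hα.trans_lt hβ
  rcases hα.lt_or_eq with hα | rfl
  · obtain ⟨h, hh0, hh⟩ : ∃ h : ℝ, 0 < h ∧ α * β = -h ^ 2 :=
      ⟨√(-(α * β)), sqrt_pos.2 (by nlinarith), by rw [sq_sqrt (by nlinarith)]; ring⟩
    obtain ⟨M₁, M₂, M₃, hM, hzero, hpar⟩ := exists_homoclinic_of_sinh_like hβ hαβ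
      (φ := fun t => sinh (h * t) / h) (ψ := fun t => cosh (h * t))
      (fun t => ((((hasDerivAt_id' t).const_mul h).sinh).div_const h).congr_deriv (by field_simp))
      (fun t => ((hasDerivAt_id' t).const_mul h).cosh.congr_deriv (by rw [hh]; field_simp))
      (fun t => by rw [hh]; field_simp; linear_combination cosh_sq_sub_sinh_sq (h * t))
    exact ⟨M₁, M₂, M₃, hM, fun t => by simp [hzero, hh0.ne'], hpar⟩
  · obtain ⟨M₁, M₂, M₃, hM, hzero, hpar⟩ := exists_homoclinic_of_sinh_like hβ hαβ
      (φ := id) (ψ := fun _ => 1) (fun t => hasDerivAt_id t)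
      (fun t => (hasDerivAt_const t (1 : ℝ)).congr_deriv (by ring)) (fun t => by ring)
    exact ⟨M₁, M₂, M₃, hM, hzero, hpar⟩

lemma exists_heteroclinic {α β : ℝ} (hα : 0 < α) (hαβ : α < β) :
    ∃ M₁ M₂ M₃ : ℝ → ℝ, IsLiePoissonSolution α β 1 M₁ M₂ M₃ ∧ (∀ t, M₂ t = 0 ↔ t = 0) ∧
      ∀ t, M₁ t ^ 2 + M₂ t ^ 2 = 2 * (β - α) * -M₃ t := by
  obtain ⟨w, hw0, hw⟩ : ∃ w : ℝ, 0 < w ∧ w ^ 2 = 2 * α * (β - α) :=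
    ⟨√(2 * α * (β - α)), sqrt_pos.2 (by nlinarith), sq_sqrt (by nlinarith)⟩
  obtain ⟨e, he0, he⟩ : ∃ e : ℝ, 0 < e ∧ e ^ 2 = (β - α) ^ 2 + w ^ 2 :=
    ⟨√((β - α) ^ 2 + w ^ 2), sqrt_pos.2 (by positivity), sq_sqrt (by positivity)⟩
  obtain ⟨F, hF⟩ : ∃ F : ℝ → ℝ, ∀ t, F t = e * cosh (w * t) + (β - α) := ⟨_, fun _ => rfl⟩
  have hF0 : ∀ t, F t ≠ 0 := fun t => by
    rw [hF]; have := cosh_pos (w * t); nlinarith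
  have hF' : ∀ t, HasDerivAt F (e * w * sinh (w * t)) t := fun t => by
    rw [funext hF]
    exact ((((hasDerivAt_id' t).const_mul w).cosh.const_mul e).add_const _).congr_deriv
      (by ring)
  refine ⟨fun t => w ^ 2 / F t, fun t => -(w * e) * sinh (w * t) / F t,
    fun t => -α + w ^ 2 / F t,
    ⟨fun t => ?_, fun t => ?_, fun t => ?_⟩, fun t => ?_, fun t => ?_⟩
  · refine ((hasDerivAt_const t (w ^ 2)).div (hF' t) (hF0 t)).congr_deriv ?_
    field_simp [hF0 t]
    ring
  · refine ((((hasDerivAt_id' t).const_mul w).sinh.const_mul (-(w * e))).div (hF' t)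
      (hF0 t)).congr_deriv ?_
    field_simp [hF0 t]
    linear_combination
      (β - α - e * cosh (w * t)) * hF t - he - e ^ 2 * cosh_sq_sub_sinh_sq (w * t)
  · refine (((hasDerivAt_const t (w ^ 2)).div (hF' t) (hF0 t)).const_add (-α)).congr_deriv ?_
    field_simp [hF0 t]
    ring
  · simp [hF0 t, hw0.ne', he0.ne']
  · field_simp [hF0 t]
    linear_combination F t ^ 2 * hw - w ^ 2 * he - w ^ 2 * e ^ 2 * cosh_sq_sub_sinh_sq (w * t)
      - w ^ 2 * (F t - (β - α) + e * cosh (w * t)) * hF t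

lemma exists_separatrix {α β γ m : ℝ} (hγ : 0 < γ) (hαβ : α < β) (hβ : 0 < β + m) :
    ∃ M₁ M₂ M₃ : ℝ → ℝ, IsLiePoissonSolution α β γ M₁ M₂ M₃ ∧ (∀ t, M₂ t = 0 ↔ t = 0) ∧
      ∀ t, M₁ t ^ 2 + M₂ t ^ 2 = 2 * (β - α) / γ * (m - M₃ t) := by
  obtain ⟨N₁, N₂, N₃, hN, hzero, hpar⟩ :
      ∃ N₁ N₂ N₃ : ℝ → ℝ, IsLiePoissonSolution (α + m) (β + m) 1 N₁ N₂ N₃ ∧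
        (∀ t, N₂ t = 0 ↔ t = 0) ∧ ∀ t, N₁ t ^ 2 + N₂ t ^ 2 = 2 * (β - α) * -N₃ t := by
    rcases le_or_gt (α + m) 0 with hα | hα
    · simpa using exists_homoclinic hα hβ
    · simpa using exists_heteroclinic hα (add_lt_add_left hαβ m)
  have hs : (√γ)⁻¹ ≠ 0 := by positivity
  have hγs : 1 / (√γ)⁻¹ ^ 2 = γ := by rw [inv_pow, sq_sqrt hγ.le]; simp
  have hM := (hN.const_mul hs).add_const (c := m)
  rw [hγs] at hM
  refine ⟨_, _, _, hM, fun t => by simp [hzero, (sqrt_pos.2 hγ).ne'], fun t => ?_⟩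
  rw [mul_pow, mul_pow, ← mul_add, hpar, inv_pow, sq_sqrt hγ.le]
  ring

lemma not_periodic_of_eq_zero_iff {f : ℝ → ℝ} (hf : ∀ t, f t = 0 ↔ t = 0) {T : ℝ} (hT : T ≠ 0) :
    ¬ Function.Periodic f T := fun h =>
  hT <| (hf T).1 <| by simpa using (h 0).trans ((hf 0).2 rfl)

noncomputable section

def sl2Alpha (a : ℝ) : ℝ := 3 / (1 + a) * Real.sign a

def sl2Beta (a : ℝ) : ℝ := 3 * (1 + a) / (4 * |a|)

def sl2Gamma (a : ℝ) : ℝ := 1 / (4 * a ^ 2) - 1 / (a * (1 + a) ^ 2)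

/-- The constraint `2H = 0` is the paraboloid `M₁² + M₂² = 6 |a| (1 + a) (sl2Apex a - M₃)`. -/
def sl2Apex (a : ℝ) : ℝ := -(3 / 16 * (a ^ 2 + 6 * a + 1) / (|a| * (1 + a)))

end

section

variable {a : ℝ}

lemma sl2Gamma_pos (ha : a ≠ 0) (ha' : 1 + a ≠ 0) (ha₁ : a ≠ 1) : 0 < sl2Gamma a := by
  have h : sl2Gamma a = (1 - a) ^ 2 / (4 * a ^ 2 * (1 + a) ^ 2) := by
    unfold sl2Gamma
    field_simp
    ring
  have : 1 - a ≠ 0 := sub_ne_zero.2 ha₁.symm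
  rw [h]
  positivity

lemma sl2Beta_sub_sl2Alpha (ha : a ≠ 0) (ha' : 1 + a ≠ 0) :
    sl2Beta a - sl2Alpha a = 3 * |a| * (1 + a) * sl2Gamma a := by
  have hsign : Real.sign a ^ 2 = 1 := by
    rcases Real.sign_apply_eq_of_ne_zero a ha with h | h <;> simp [h]
  have habs : |a| = Real.sign a * a := by
    rcases ha.lt_or_gt with h | h
    · rw [abs_of_neg h, Real.sign_of_neg h]; ring
    · rw [abs_of_pos h, Real.sign_of_pos h]; ring
  have : Real.sign a ≠ 0 := Real.sign_eq_zero_iff.not.2 ha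
  unfold sl2Beta sl2Alpha sl2Gamma
  rw [habs]
  field_simp
  linear_combination (-(1 + a) ^ 2) * hsign

lemma sl2Beta_add_sl2Apex_pos (ha : a ≠ 0) (ha' : 0 < 1 + a) : 0 < sl2Beta a + sl2Apex a := by
  have h : sl2Beta a + sl2Apex a = 3 * (3 * a ^ 2 + 2 * a + 3) / (16 * |a| * (1 + a)) := by
    unfold sl2Beta sl2Apex
    field_simp
    ring
  have : 0 < 3 * a ^ 2 + 2 * a + 3 := by nlinarith [sq_nonneg (a + 1)]
  rw [h]
  positivity

end

theorem stmt_9 (a : ℝ) (ha : a ∈ Set.Ioo (-1 : ℝ) 0 ∪ Set.Ioo (0 : ℝ) 1) :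
    ∃ M₁ M₂ M₃ : ℝ → ℝ,
      (∀ t, HasDerivAt M₁
        (M₂ t * M₃ t + (3 / (1 + a)) * Real.sign a * M₂ t) t) ∧
      (∀ t, HasDerivAt M₂
        (-(M₁ t * M₃ t) - (3 * (1 + a) / (4 * |a|)) * M₁ t) t) ∧
      (∀ t, HasDerivAt M₃
        ((1 / (4 * a ^ 2) - 1 / (a * (1 + a) ^ 2)) * M₁ t * M₂ t) t) ∧
      (¬ ∀ t : ℝ, (M₁ t, M₂ t, M₃ t) = (M₁ 0, M₂ 0, M₃ 0)) ∧
      (¬ ∃ T : ℝ, 0 < T ∧ ∀ t : ℝ,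
        (M₁ (t + T), M₂ (t + T), M₃ (t + T)) = (M₁ t, M₂ t, M₃ t)) ∧
      (∀ t : ℝ,
        (M₁ t ^ 2 + M₂ t ^ 2) / (2 * |a| * (1 + a)) + 3 * M₃ t
          + (9 / 16) * (a ^ 2 + 6 * a + 1) / (|a| * (1 + a)) = 0) := by
  have ha0 : a ≠ 0 := by rcases ha with h | h <;> [exact h.2.ne; exact h.1.ne']
  have h1a : 0 < 1 + a := by rcases ha with h | h <;> linarith [h.1]
  have hγ := sl2Gamma_pos ha0 h1a.ne' (by rcases ha with h | h <;> linarith [h.2])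
  have hβα := sl2Beta_sub_sl2Alpha ha0 h1a.ne'
  have hαβ : sl2Alpha a < sl2Beta a :=
    sub_pos.1 (hβα ▸ mul_pos (mul_pos (mul_pos three_pos (abs_pos.2 ha0)) h1a) hγ)
  obtain ⟨M₁, M₂, M₃, hM, hzero, hpar⟩ :=
    exists_separatrix hγ hαβ (sl2Beta_add_sl2Apex_pos ha0 h1a)
  refine ⟨M₁, M₂, M₃, fun t => (hM.deriv₁ t).congr_deriv (by unfold sl2Alpha; ring),
    fun t => (hM.deriv₂ t).congr_deriv (by unfold sl2Beta; ring),
    fun t => (hM.deriv₃ t).congr_deriv (by unfold sl2Gamma; ring),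
    fun h => not_periodic_of_eq_zero_iff hzero one_ne_zero fun t => ?_,
    fun ⟨T, hT, h⟩ => not_periodic_of_eq_zero_iff hzero hT.ne' fun t => ?_, fun t => ?_⟩
  · simp only [Prod.mk.injEq] at h
    rw [(h (t + 1)).2.1, (h t).2.1]
  · simp only [Prod.mk.injEq] at h
    exact (h t).2.1
  · rw [hpar, hβα, sl2Apex]
    field_simp
    ring
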